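/- arXiv:2406.12160 — 5 statements merged into one kernel-verified Lean document; each statement's English description precedes it below -/
import Mathlib

section
/- The block circulant code C_BC[μ,2,ω,ρ] with overlap factor λ=2 has minimum distance exactly 2ρ+1. -/
open Fin.NatCast in
/-- Membership in the block circulant code `C_BC[M, λ, ω, ρ]` in its evaluation-code
form: the codeword consists of `M` data blocks `d i : Fin ω → F` and `M` parity blocks
`p i : Fin ρ → F`; for every `i` the `i`-th local codeword (the data blocks
`d i, d (i+1), …, d (i+λ-1)` together with the parity block `p i`) is the evaluation of a
message polynomial of degree `≤ λω - 1` at the evaluation points `αo`/`αe`, the point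
sets being shared cyclically (with period `λ`) between consecutive local codes. -/
def inBC {F : Type*} [Field F] (M lam ω ρ : ℕ) [NeZero M] [NeZero lam]
    (αo : Fin lam → Fin ω → F) (αe : Fin lam → Fin ρ → F)
    (d : Fin M → Fin ω → F) (p : Fin M → Fin ρ → F) : Prop :=
  ∀ i : Fin M, ∃ m : Polynomial F, m.natDegree ≤ lam * ω - 1 ∧
    (∀ (j : Fin lam) (s : Fin ω),
      d (i + ((j : ℕ) : Fin M)) s = m.eval (αo (((i : ℕ) : Fin lam) + j) s)) ∧
    (∀ s : Fin ρ, p i s = m.eval (αe ((i : ℕ) : Fin lam) s))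

/-- Hamming weight of a codeword of the block circulant code. -/
def bcWt {F : Type*} [Field F] [DecidableEq F] {M ω ρ : ℕ}
    (d : Fin M → Fin ω → F) (p : Fin M → Fin ρ → F) : ℕ :=
  ∑ i : Fin M, ((Finset.univ.filter fun s => d i s ≠ 0).card +
    (Finset.univ.filter fun s => p i s ≠ 0).card)

/-!
Each local code is a Reed–Solomon code of length `2ω + ρ` and dimension `2ω`, so a nonzero
local codeword has weight at least `ρ + 1`. In a nonzero codeword, look at a maximal run of
nonzero data blocks (or at all blocks, if none vanishes). Either two local codes whose supports
meet only in zero data blocks are active, giving weight at least `2ρ + 2`, or the run is a single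
block `d (i + 1)` with `d i = d (i + 2)` (this includes `μ = 2`). Then the local codes `i` and
`i + 1` agree on all `2ω` data points, so they share one message polynomial; it is evaluated at
all `2(ω + ρ)` points, giving weight at least `2ρ + 1`. The bound is attained by the Lagrange
basis polynomial vanishing at all data points but one.
-/
open Polynomial Finset Function
open Fin.NatCast

theorem Polynomial.eval_zero_comp {R α : Type*} [Semiring R] (f : α → R) :
    (0 : R[X]).eval ∘ f = 0 := by
  ext
  simp

theorem hammingNorm_sumElim {ι κ β : Type*} [Fintype ι] [Fintype κ] [Zero β] [DecidableEq β]
    (f : ι → β) (g : κ → β) :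
    hammingNorm (Sum.elim f g) = hammingNorm f + hammingNorm g := by
  simp only [hammingNorm, card_filter, Fintype.sum_sum_type, Sum.elim_inl, Sum.elim_inr]
  rfl

theorem hammingNorm_pi_single_le_one {ι β : Type*} [Fintype ι] [DecidableEq ι] [Zero β]
    [DecidableEq β] (i : ι) (b : β) : hammingNorm (Pi.single i b : ι → β) ≤ 1 := by
  have hsupp : ∀ j, (Pi.single i b : ι → β) j ≠ 0 → j = i := fun j hj =>
    by_contra fun h => hj (by simp [h])
  exact card_le_one.2 fun j hj k hk =>
    (hsupp j (mem_filter.1 hj).2).trans (hsupp k (mem_filter.1 hk).2).symm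

theorem card_sub_natDegree_le_hammingNorm_eval {R ι : Type*} [CommRing R] [IsDomain R]
    [DecidableEq R] [Fintype ι] {pts : ι → R} (hpts : Injective pts) {m : R[X]} (hm : m ≠ 0) :
    Fintype.card ι - m.natDegree ≤ hammingNorm (m.eval ∘ pts) := by
  have hroots : Fintype.card {i // m.eval (pts i) = 0} ≤ m.natDegree := by
    by_contra! h
    exact hm (eq_zero_of_natDegree_lt_card_of_eval_eq_zero m
      (hpts.comp Subtype.val_injective) (fun i => i.2) h)
  rw [Fintype.card_subtype] at hroots
  have := card_filter_add_card_filter_not (s := (univ : Finset ι)) (fun i => m.eval (pts i) = 0)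
  simp only [hammingNorm, card_univ, comp_apply, ne_eq] at this ⊢
  omega

theorem Fin.exists_not_and_add_one {M : ℕ} [NeZero M] {P : Fin M → Prop}
    (h : ∃ i, P i) (h' : ∃ i, ¬P i) : ∃ i, ¬P i ∧ P (i + 1) := by
  obtain ⟨j, hj⟩ := h
  obtain ⟨k, hk⟩ := h'
  by_contra! hstep
  have hiter : ∀ n : ℕ, ¬P (k + n) := by
    intro n
    induction n with
    | zero => simpa using hk
    | succ n ih => simpa [add_assoc] using hstep _ ih
  exact hiter (j - k).val (by simpa using hj)

theorem Fin.self_ne_add_one {M : ℕ} [NeZero M] (hM : 1 < M) (i : Fin M) : i ≠ i + 1 := by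
  rw [Ne, left_eq_add, Fin.ext_iff, Fin.val_one', Fin.val_zero, Nat.mod_eq_of_lt hM]
  exact one_ne_zero

theorem Fin.injective_sumElim_mk {κ : Type*} (c : Fin 2) :
    Injective (Sum.elim (Prod.mk c) (Prod.mk (c + 1)) : κ ⊕ κ → Fin 2 × κ) :=
  (Prod.mk_right_injective c).sumElim (Prod.mk_right_injective (c + 1)) (by fin_cases c <;> simp)

theorem Fin.add_one_add_one_eq_self {M : ℕ} [NeZero M] (hM : M = 2) (i : Fin M) :
    i + 1 + 1 = i := by
  rw [add_assoc, add_eq_left, Fin.ext_iff, Fin.val_add, Fin.val_one', Fin.val_zero]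
  simp [hM]

theorem Fin.disjoint_pair_add_two {M : ℕ} [NeZero M] (hM : 4 ≤ M) (k : Fin M) :
    Disjoint ({k, k + 1} : Finset (Fin M)) {k + 1 + 1, k + 1 + 1 + 1} := by
  have h₁ : ((1 : Fin M) : ℕ) = 1 := by rw [Fin.val_one', Nat.mod_eq_of_lt (by omega)]
  have h₂ : ((1 + 1 : Fin M) : ℕ) = 2 := by rw [Fin.val_add, h₁, Nat.mod_eq_of_lt (by omega)]
  have h₃ : ((1 + (1 + 1) : Fin M) : ℕ) = 3 := by
    rw [Fin.val_add, h₁, h₂, Nat.mod_eq_of_lt (by omega)]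
  simp only [disjoint_insert_left, disjoint_insert_right, disjoint_singleton, mem_insert,
    mem_singleton, add_assoc, left_eq_add, add_right_inj, not_or]
  simp [Fin.ext_iff, h₂, h₃]
  omega

theorem Fin.natCast_val_add_one {n M : ℕ} [NeZero n] [NeZero M] (h : n ∣ M) (i : Fin M) :
    (((i + 1 : Fin M) : ℕ) : Fin n) = ((i : ℕ) : Fin n) + 1 := by
  ext
  simp only [Fin.val_natCast, Fin.val_add, Fin.val_one']
  rw [Nat.mod_mod_of_dvd _ h, Nat.add_mod, Nat.mod_mod_of_dvd _ h, ← Nat.add_mod]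

section Weight

variable {F : Type*} [Field F] [DecidableEq F] {M ω ρ : ℕ}
  {d : Fin M → Fin ω → F} {p : Fin M → Fin ρ → F}

theorem bcWt_eq_sum : bcWt d p = ∑ i, hammingNorm (d i) + ∑ i, hammingNorm (p i) := by
  rw [bcWt, sum_add_distrib]
  rfl

theorem sum_add_sum_le_bcWt (A B : Finset (Fin M)) :
    ∑ a ∈ A, hammingNorm (d a) + ∑ b ∈ B, hammingNorm (p b) ≤ bcWt d p := by
  rw [bcWt_eq_sum]
  exact add_le_add (sum_le_sum_of_subset (subset_univ A)) (sum_le_sum_of_subset (subset_univ B))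

end Weight

section LocalCode

variable {α : Type*} {ω ρ : ℕ} {αo : Fin 2 → Fin ω → α} {αe : Fin 2 → Fin ρ → α}

theorem injective_dataParityPoints
    (hinj : Injective (Sum.elim (fun x : Fin 2 × Fin ω => αo x.1 x.2)
      (fun x : Fin 2 × Fin ρ => αe x.1 x.2))) (c : Fin 2) :
    Injective (Sum.elim (Sum.elim (αo c) (αo (c + 1))) (Sum.elim (αe c) (αe (c + 1)))) := by
  convert hinj.comp ((Fin.injective_sumElim_mk c).sumMap (Fin.injective_sumElim_mk c)) using 1
  funext x
  rcases x with (s | s) | (t | t) <;> rfl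

theorem injective_localPoints
    (hinj : Injective (Sum.elim (fun x : Fin 2 × Fin ω => αo x.1 x.2)
      (fun x : Fin 2 × Fin ρ => αe x.1 x.2))) (c : Fin 2) :
    Injective (Sum.elim (Sum.elim (αo c) (αo (c + 1))) (αe c)) := by
  simpa [Sum.elim_comp_map] using
    (injective_dataParityPoints hinj c).comp (injective_id.sumMap Sum.inl_injective)

theorem injective_dataPoints
    (hinj : Injective (Sum.elim (fun x : Fin 2 × Fin ω => αo x.1 x.2)
      (fun x : Fin 2 × Fin ρ => αe x.1 x.2))) (c : Fin 2) :
    Injective (Sum.elim (αo c) (αo (c + 1))) := by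
  simpa using (injective_localPoints hinj c).comp Sum.inl_injective

end LocalCode

section LocalCodeWeight

variable {F : Type*} [Field F] {ω ρ : ℕ} {αo : Fin 2 → Fin ω → F} {αe : Fin 2 → Fin ρ → F}
  (hinj : Injective (Sum.elim (fun x : Fin 2 × Fin ω => αo x.1 x.2)
    (fun x : Fin 2 × Fin ρ => αe x.1 x.2)))
include hinj

theorem eq_of_eval_dataPoints_eq (hω : 0 < ω) (c : Fin 2) {m m' : F[X]}
    (hdeg : m.natDegree ≤ 2 * ω - 1) (hdeg' : m'.natDegree ≤ 2 * ω - 1)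
    (h₀ : ∀ s, m.eval (αo c s) = m'.eval (αo c s))
    (h₁ : ∀ s, m.eval (αo (c + 1) s) = m'.eval (αo (c + 1) s)) : m = m' := by
  refine eq_of_natDegree_lt_card_of_eval_eq m m' (injective_dataPoints hinj c) ?_ ?_
  · rintro (s | s)
    exacts [h₀ s, h₁ s]
  · simp only [Fintype.card_sum, Fintype.card_fin]
    omega

variable [DecidableEq F]

theorem localCode_weight (hω : 0 < ω) (c : Fin 2) {m : F[X]} (hm : m ≠ 0)
    (hdeg : m.natDegree ≤ 2 * ω - 1) :
    ρ + 1 ≤ hammingNorm (m.eval ∘ αo c) + hammingNorm (m.eval ∘ αo (c + 1))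
      + hammingNorm (m.eval ∘ αe c) := by
  have h := card_sub_natDegree_le_hammingNorm_eval (injective_localPoints hinj c) hm
  simp only [Sum.comp_elim, hammingNorm_sumElim, Fintype.card_sum, Fintype.card_fin] at h
  omega

theorem pairedLocalCodes_weight (hω : 0 < ω) (c : Fin 2) {m : F[X]} (hm : m ≠ 0)
    (hdeg : m.natDegree ≤ 2 * ω - 1) :
    2 * ρ + 1 ≤ hammingNorm (m.eval ∘ αo c)
      + hammingNorm (m.eval ∘ αo (c + 1))
      + (hammingNorm (m.eval ∘ αe c) + hammingNorm (m.eval ∘ αe (c + 1))) := by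
  have h := card_sub_natDegree_le_hammingNorm_eval (injective_dataParityPoints hinj c) hm
  simp only [Sum.comp_elim, hammingNorm_sumElim, Fintype.card_sum, Fintype.card_fin] at h
  omega

end LocalCodeWeight

section Codeword

variable {F : Type*} [Field F] {M ω ρ : ℕ} [NeZero M]
  {αo : Fin 2 → Fin ω → F} {αe : Fin 2 → Fin ρ → F} {d : Fin M → Fin ω → F} {p : Fin M → Fin ρ → F}

theorem inBC_two_iff : inBC M 2 ω ρ αo αe d p ↔ ∀ i : Fin M, ∃ m : F[X],
    m.natDegree ≤ 2 * ω - 1 ∧ d i = m.eval ∘ αo (i : ℕ) ∧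
      d (i + 1) = m.eval ∘ αo ((i : ℕ) + 1) ∧ p i = m.eval ∘ αe (i : ℕ) := by
  refine forall_congr' fun i => exists_congr fun m => and_congr_right fun _ => ?_
  constructor
  · rintro ⟨hd, hp⟩
    exact ⟨funext fun s => by simpa using hd 0 s, funext fun s => by simpa using hd 1 s, funext hp⟩
  · rintro ⟨hd₀, hd₁, hp⟩
    refine ⟨fun j s => ?_, fun t => congrFun hp t⟩
    fin_cases j
    · simp [hd₀]
    · simp [hd₁]

theorem parity_eq_zero_of_data_eq_zero
    (hinj : Injective (Sum.elim (fun x : Fin 2 × Fin ω => αo x.1 x.2)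
      (fun x : Fin 2 × Fin ρ => αe x.1 x.2))) (hω : 0 < ω)
    (hin : inBC M 2 ω ρ αo αe d p) (hd : d = 0) : p = 0 := by
  funext i
  obtain ⟨m, hdeg, hd₀, hd₁, hp⟩ := inBC_two_iff.1 hin i
  have hm : m = 0 := eq_of_eval_dataPoints_eq hinj hω _ hdeg (by simp)
    (fun s => by simpa [hd] using (congrFun hd₀ s).symm)
    (fun s => by simpa [hd] using (congrFun hd₁ s).symm)
  rw [hp, hm, eval_zero_comp]
  rfl

end Codeword

section Lower
variable {F : Type*} [Field F] [DecidableEq F] {M ω ρ : ℕ} [NeZero M]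
  {αo : Fin 2 → Fin ω → F} {αe : Fin 2 → Fin ρ → F} {d : Fin M → Fin ω → F} {p : Fin M → Fin ρ → F}
  (hinj : Injective (Sum.elim (fun x : Fin 2 × Fin ω => αo x.1 x.2)
    (fun x : Fin 2 × Fin ρ => αe x.1 x.2))) (hω : 0 < ω)
include hinj hω

theorem localCode_weight_le (hin : inBC M 2 ω ρ αo αe d p) (i : Fin M)
    (hne : d i ≠ 0 ∨ d (i + 1) ≠ 0) :
    ρ + 1 ≤ hammingNorm (d i) + hammingNorm (d (i + 1)) + hammingNorm (p i) := by
  obtain ⟨m, hdeg, hd₀, hd₁, hp⟩ := inBC_two_iff.1 hin i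
  have hm : m ≠ 0 := by
    rintro rfl
    simp [hd₀, hd₁, eval_zero_comp, -eval_zero] at hne
  rw [hd₀, hd₁, hp]
  exact localCode_weight hinj hω _ hm hdeg

theorem two_mul_add_one_le_bcWt_of_data_add_two_eq (hM : 2 ∣ M) (hin : inBC M 2 ω ρ αo αe d p)
    (i : Fin M) (hd : d (i + 1) ≠ 0) (hper : d (i + 1 + 1) = d i) : 2 * ρ + 1 ≤ bcWt d p := by
  have hM₁ : 1 < M := Nat.le_of_dvd (NeZero.pos M) hM
  obtain ⟨m, hdeg, hd₀, hd₁, hp⟩ := inBC_two_iff.1 hin i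
  obtain ⟨m', hdeg', hd₀', hd₁', hp'⟩ := inBC_two_iff.1 hin (i + 1)
  set c : Fin 2 := ((i : ℕ) : Fin 2)
  have hc : (((i + 1 : Fin M) : ℕ) : Fin 2) = c + 1 := Fin.natCast_val_add_one hM i
  rw [hc] at hd₀' hd₁' hp'
  rw [Fin.add_one_add_one_eq_self rfl c] at hd₁'
  have hmm' : m = m' := eq_of_eval_dataPoints_eq hinj hω c hdeg hdeg'
    (fun s => congrFun (hd₀.symm.trans (hper.symm.trans hd₁')) s)
    (fun s => congrFun (hd₁.symm.trans hd₀') s)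
  subst hmm'
  have hm : m ≠ 0 := by
    rintro rfl
    exact hd (by rw [hd₁, eval_zero_comp])
  calc 2 * ρ + 1
      ≤ hammingNorm (d i) + hammingNorm (d (i + 1))
          + (hammingNorm (p i) + hammingNorm (p (i + 1))) := by
        rw [hd₀, hd₁, hp, hp']
        exact pairedLocalCodes_weight hinj hω c hm hdeg
    _ = ∑ a ∈ {i, i + 1}, hammingNorm (d a) + ∑ b ∈ {i, i + 1}, hammingNorm (p b) := by
        rw [sum_pair (Fin.self_ne_add_one hM₁ i), sum_pair (Fin.self_ne_add_one hM₁ i)]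
    _ ≤ bcWt d p := sum_add_sum_le_bcWt _ _

theorem two_mul_add_two_le_bcWt_of_ne (hin : inBC M 2 ω ρ αo αe d p) {i j : Fin M}
    (hij : i ≠ j) (hi : d i ≠ 0 ∨ d (i + 1) ≠ 0) (hj : d j ≠ 0 ∨ d (j + 1) ≠ 0)
    (hoverlap : ∀ a ∈ ({i, i + 1} : Finset (Fin M)), a ∈ ({j, j + 1} : Finset (Fin M)) → d a = 0) :
    2 * (ρ + 1) ≤ bcWt d p := by
  have hM₁ : 1 < M := by
    by_contra h
    exact hij (Fin.ext (by omega))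
  have hcap : ∑ a ∈ {i, i + 1} ∩ {j, j + 1}, hammingNorm (d a) = 0 :=
    sum_eq_zero fun a ha => by
      rw [hoverlap a (mem_inter.1 ha).1 (mem_inter.1 ha).2, hammingNorm_zero]
  have hcup := sum_union_inter (s₁ := {i, i + 1}) (s₂ := {j, j + 1})
    (f := fun a => hammingNorm (d a))
  have hlocal_i := localCode_weight_le hinj hω hin i hi
  have hlocal_j := localCode_weight_le hinj hω hin j hj
  have hbound := sum_add_sum_le_bcWt (d := d) (p := p) ({i, i + 1} ∪ {j, j + 1}) {i, j}
  rw [sum_pair (Fin.self_ne_add_one hM₁ i), sum_pair (Fin.self_ne_add_one hM₁ j)] at hcup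
  rw [sum_pair hij] at hbound
  omega

theorem two_mul_add_one_le_bcWt (hM : 2 ∣ M) (hin : inBC M 2 ω ρ αo αe d p)
    (hne : d ≠ 0 ∨ p ≠ 0) : 2 * ρ + 1 ≤ bcWt d p := by
  have hd : d ≠ 0 := fun hd =>
    hne.elim (· hd) (· (parity_eq_zero_of_data_eq_zero hinj hω hin hd))
  obtain ⟨k, hk⟩ := Function.ne_iff.1 hd
  by_cases hall : ∀ i, d i ≠ 0
  · obtain rfl | hM₄ : M = 2 ∨ 4 ≤ M := by
      have := Nat.le_of_dvd (NeZero.pos M) hM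
      omega
    · exact two_mul_add_one_le_bcWt_of_data_add_two_eq hinj hω hM hin k (hall _)
        (by rw [Fin.add_one_add_one_eq_self rfl k])
    · have hdisj := Fin.disjoint_pair_add_two hM₄ k
      have := two_mul_add_two_le_bcWt_of_ne hinj hω hin (i := k) (j := k + 1 + 1)
        (fun h => disjoint_left.1 hdisj (mem_insert_self k _) (h ▸ mem_insert_self _ _))
        (Or.inl (hall _)) (Or.inl (hall _))
        (fun a ha ha' => absurd ha' (disjoint_left.1 hdisj ha))
      omega
  · push Not at hall
    -- `i₀ + 1` starts and `i₁` ends a run of nonzero data blocks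
    obtain ⟨i₀, hi₀, hi₀'⟩ := Fin.exists_not_and_add_one (P := fun i => d i ≠ 0) ⟨k, hk⟩
      (by simpa using hall)
    obtain ⟨i₁, hi₁, hi₁'⟩ := Fin.exists_not_and_add_one (P := fun i => d i = 0) hall ⟨k, hk⟩
    simp only [ne_eq, not_not] at hi₀ hi₁
    by_cases h : i₁ = i₀ + 1
    · subst h
      exact two_mul_add_one_le_bcWt_of_data_add_two_eq hinj hω hM hin i₀ hi₀' (hi₁'.trans hi₀.symm)
    · have := two_mul_add_two_le_bcWt_of_ne hinj hω hin (i := i₀) (j := i₁)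
        (fun h => hi₁ (h ▸ hi₀)) (Or.inr hi₀') (Or.inl hi₁) (by
          simp only [mem_insert, mem_singleton]
          rintro a (rfl | rfl) (h' | h')
          exacts [hi₀, hi₀, absurd h'.symm h, h' ▸ hi₁'])
      omega

end Lower

section Construction
variable {F : Type*} [Field F] {M ω ρ : ℕ} [NeZero M]
  {αo : Fin 2 → Fin ω → F} {αe : Fin 2 → Fin ρ → F}

theorem exists_natDegree_le_eval_eq_single
    (hαo : Injective fun x : Fin 2 × Fin ω => αo x.1 x.2) (s₀ : Fin ω) :
    ∃ m : F[X], m.natDegree ≤ 2 * ω - 1 ∧ m.eval ∘ αo 0 = 0 ∧ m.eval ∘ αo 1 = Pi.single s₀ 1 := by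
  set v : Fin 2 × Fin ω → F := fun x => αo x.1 x.2
  refine ⟨Lagrange.basis univ v (1, s₀), ?_, ?_, ?_⟩
  · simp [Lagrange.natDegree_basis hαo.injOn (mem_univ _)]
  · ext s
    exact Lagrange.eval_basis_of_ne (v := v) (j := (0, s)) (by simp) (mem_univ _)
  · ext s
    rcases eq_or_ne s s₀ with rfl | hs
    · simpa using Lagrange.eval_basis_self (v := v) (i := (1, s)) hαo.injOn (mem_univ _)
    · rw [comp_apply, Pi.single_eq_of_ne hs]
      exact Lagrange.eval_basis_of_ne (v := v) (j := (1, s)) (by simpa [eq_comm] using hs)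
        (mem_univ _)

variable [DecidableEq F]

theorem exists_inBC_ne_zero_bcWt_le (hM : 2 ∣ M) (hω : 0 < ω)
    (hαo : Injective fun x : Fin 2 × Fin ω => αo x.1 x.2) :
    ∃ (d : Fin M → Fin ω → F) (p : Fin M → Fin ρ → F),
      inBC M 2 ω ρ αo αe d p ∧ d ≠ 0 ∧ bcWt d p ≤ 2 * ρ + 1 := by
  have hM₁ : 1 < M := Nat.le_of_dvd (NeZero.pos M) hM
  obtain ⟨m, hdeg, hm₀, hm₁⟩ := exists_natDegree_le_eval_eq_single hαo ⟨0, hω⟩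
  have h01 : (0 : Fin M) ≠ 1 := by simpa using Fin.self_ne_add_one hM₁ 0
  -- local codes `0` and `1` carry `m`, all others carry `0`
  refine ⟨Pi.single 1 (Pi.single ⟨0, hω⟩ 1),
    fun i => if i = 0 ∨ i = 1 then m.eval ∘ αe (i : ℕ) else 0, ?_, by simp, ?_⟩
  · have hphase₁ : (((1 : Fin M) : ℕ) : Fin 2) = 1 := by
      rw [Fin.val_one', Nat.mod_eq_of_lt hM₁, Nat.cast_one]
    refine inBC_two_iff.2 fun i => ?_
    rcases eq_or_ne i 0 with rfl | hi₀
    · exact ⟨m, hdeg, by simp [h01, hm₀], by simp [hm₁], by simp⟩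
    rcases eq_or_ne i 1 with rfl | hi₁
    · refine ⟨m, hdeg, by rw [hphase₁, hm₁]; simp, ?_, by rw [hphase₁]; simp⟩
      rw [Pi.single_eq_of_ne (Fin.self_ne_add_one hM₁ 1).symm, hphase₁,
        show (1 + 1 : Fin 2) = 0 from rfl, hm₀]
    · exact ⟨0, by simp, by simp [hi₁, eval_zero_comp, -eval_zero],
        by simp [hi₀, eval_zero_comp, -eval_zero], by simp [hi₀, hi₁, eval_zero_comp, -eval_zero]⟩
  · have hdata : ∑ i : Fin M, hammingNorm
        (Pi.single (M := fun _ => Fin ω → F) 1 (Pi.single ⟨0, hω⟩ 1) i) ≤ 1 := by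
      rw [sum_eq_single 1 (fun i _ hi => by simp [hi]) (by simp), Pi.single_eq_same]
      exact hammingNorm_pi_single_le_one _ _
    have hparity : ∑ i : Fin M, hammingNorm
        (if i = 0 ∨ i = 1 then m.eval ∘ αe (i : ℕ) else 0 : Fin ρ → F) ≤ ρ + ρ := by
      rw [← sum_subset (subset_univ {0, 1}) fun i _ hi => by simp_all, sum_pair h01]
      exact add_le_add (hammingNorm_le_card_fintype.trans_eq (Fintype.card_fin ρ))
        (hammingNorm_le_card_fintype.trans_eq (Fintype.card_fin ρ))
    rw [bcWt_eq_sum]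
    omega

end Construction

theorem stmt7_general {F : Type*} [Field F] [DecidableEq F] {ν ω ρ : ℕ}
    (hω : 0 < ω)
    (M : ℕ) [NeZero M] (hM : M = 2 * ν)
    (αo : Fin 2 → Fin ω → F) (αe : Fin 2 → Fin ρ → F)
    (hinj : Function.Injective
      (Sum.elim (fun x : Fin 2 × Fin ω => αo x.1 x.2)
                (fun x : Fin 2 × Fin ρ => αe x.1 x.2))) :
    (∀ (d : Fin M → Fin ω → F) (p : Fin M → Fin ρ → F),
      inBC M 2 ω ρ αo αe d p → (d ≠ 0 ∨ p ≠ 0) → 2 * ρ + 1 ≤ bcWt d p) ∧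
    (∃ (d : Fin M → Fin ω → F) (p : Fin M → Fin ρ → F),
      inBC M 2 ω ρ αo αe d p ∧ (d ≠ 0 ∨ p ≠ 0) ∧ bcWt d p = 2 * ρ + 1) := by
  have hM₂ : 2 ∣ M := hM ▸ dvd_mul_right 2 ν
  refine ⟨fun d p hin hne => two_mul_add_one_le_bcWt hinj hω hM₂ hin hne, ?_⟩
  obtain ⟨d, p, hin, hd, hwt⟩ :=
    exists_inBC_ne_zero_bcWt_le (αe := αe) hM₂ hω (hinj.comp Sum.inl_injective)
  exact ⟨d, p, hin, Or.inl hd,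
    le_antisymm hwt (two_mul_add_one_le_bcWt hinj hω hM₂ hin (Or.inl hd))⟩

/-- The block circulant code `C_BC[μ, 2, ω, ρ]` with overlap factor
`λ = 2` (and `μ = 2ν` local codes, all `2(ω+ρ)` evaluation points distinct and nonzero)
has minimum distance exactly `2ρ + 1`. -/
theorem stmt7 {F : Type*} [Field F] [DecidableEq F] {ν ω ρ : ℕ}
    (hν : 0 < ν) (hω : 0 < ω) (hρ : 0 < ρ)
    (M : ℕ) [NeZero M] (hM : M = 2 * ν)
    (αo : Fin 2 → Fin ω → F) (αe : Fin 2 → Fin ρ → F)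
    (hinj : Function.Injective
      (Sum.elim (fun x : Fin 2 × Fin ω => αo x.1 x.2)
                (fun x : Fin 2 × Fin ρ => αe x.1 x.2)))
    (h0o : ∀ j s, αo j s ≠ 0) (h0e : ∀ j s, αe j s ≠ 0) :
    (∀ (d : Fin M → Fin ω → F) (p : Fin M → Fin ρ → F),
      inBC M 2 ω ρ αo αe d p → (d ≠ 0 ∨ p ≠ 0) → 2 * ρ + 1 ≤ bcWt d p) ∧
    (∃ (d : Fin M → Fin ω → F) (p : Fin M → Fin ρ → F),
      inBC M 2 ω ρ αo αe d p ∧ (d ≠ 0 ∨ p ≠ 0) ∧ bcWt d p = 2 * ρ + 1) :=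
  stmt7_general hω M hM αo αe hinj
end

section
/- If c is a codeword of a linear code with local codes on supports A_1,…,A_μ arranged cyclically (each consecutive pair A_i, A_{(i+1) mod μ} overlapping, μ ≥ 4), each local code having minimum distance ρ+1, and the set E of erased coordinates satisfies ρ < |E| ≤ 2ρ while no local code has between 1 and ρ erasures, then all coordinates of E are contained in the union A_i ∪ A_{(i+1) mod μ} of a single pair of consecutive supports. -/
/-!
Two non-adjacent supports are disjoint, so if both met `E` they would each carry more than `ρ`
erasures and together more than `2ρ ≥ |E|`. Hence the supports meeting `E` are pairwise
cyclically adjacent, and for `μ ≥ 4` such a set of indices lies in some `{i, i + 1}`.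
-/

open Finset

open Fin.NatCast in
theorem Fin.natCast_ne_zero_of_lt {M k : ℕ} [NeZero M] (hk0 : k ≠ 0) (hk : k < M) :
    (k : Fin M) ≠ 0 := by
  rw [Ne, Fin.natCast_eq_zero]
  exact Nat.not_dvd_of_pos_of_lt (Nat.pos_of_ne_zero hk0) hk

open Fin.NatCast Fin.CommRing in
theorem Fin.exists_forall_eq_or_eq_add_one_of_pairwise_adjacent {M : ℕ} [NeZero M] (hM : 4 ≤ M)
    (P : Fin M → Prop) (hP : ∀ i j, P i → P j → j = i ∨ j = i + 1 ∨ i = j + 1) :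
    ∃ i, ∀ j, P j → j = i ∨ j = i + 1 := by
  have hsmall : ∀ k : ℕ, k ≠ 0 → k < 4 → (k : Fin M) ≠ 0 := fun k hk0 hk =>
    Fin.natCast_ne_zero_of_lt hk0 (by omega)
  rcases em (∃ i₀, P i₀) with ⟨i₀, hi₀⟩ | hempty
  swap
  · exact ⟨0, fun j hj => (hempty ⟨j, hj⟩).elim⟩
  by_cases hsucc : P (i₀ + 1)
  · refine ⟨i₀, fun j hj => ?_⟩
    rcases hP _ _ hi₀ hj with h | h | hpred
    · exact .inl h
    · exact .inr h
    · -- `j = i₀ - 1` would also be adjacent to `i₀ + 1`, which forces `M ≤ 3`.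
      exfalso
      rcases hP _ _ hsucc hj with h | h | h
      · exact hsmall 2 (by norm_num) (by norm_num) (by linear_combination -h - hpred)
      · exact hsmall 3 (by norm_num) (by norm_num) (by linear_combination -h - hpred)
      · exact hsmall 1 (by norm_num) (by norm_num) (by linear_combination h - hpred)
  · refine ⟨i₀ - 1, fun j hj => ?_⟩
    rcases hP _ _ hi₀ hj with h | h | h
    · exact .inr (by rw [h, sub_add_cancel])
    · exact absurd (h ▸ hj) hsucc
    · exact .inl (eq_sub_of_add_eq h.symm)

theorem Finset.card_inter_add_card_inter_le_of_disjoint {α : Type*} [DecidableEq α]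
    (E : Finset α) {A B : Finset α} (h : Disjoint A B) :
    #(E ∩ A) + #(E ∩ B) ≤ #E := by
  rw [← card_union_of_disjoint (h.mono inter_subset_right inter_subset_right)]
  exact card_le_card (union_subset inter_subset_left inter_subset_left)

theorem stmt9_general {n ρ : ℕ} (M : ℕ) [NeZero M] (hM : 4 ≤ M)
    (A : Fin M → Finset (Fin n))
    (hcover : ∀ x : Fin n, ∃ i, x ∈ A i)
    (hdisj : ∀ i j : Fin M, j ≠ i → j ≠ i + 1 → i ≠ j + 1 → Disjoint (A i) (A j))
    (E : Finset (Fin n)) (hhi : E.card ≤ 2 * ρ)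
    (hloc : ∀ i, (E ∩ A i).card = 0 ∨ ρ < (E ∩ A i).card) :
    ∃ i : Fin M, (∀ x ∈ E, x ∈ A i ∪ A (i + 1)) ∧
      (∀ i', 0 < (E ∩ A i').card → i' = i ∨ i' = i + 1) := by
  have hadjacent : ∀ i j, 0 < #(E ∩ A i) → 0 < #(E ∩ A j) → j = i ∨ j = i + 1 ∨ i = j + 1 := by
    intro i j hi hj
    by_contra! hfar
    have hsum := card_inter_add_card_inter_le_of_disjoint E (hdisj i j hfar.1 hfar.2.1 hfar.2.2)
    have hbig_i := (hloc i).resolve_left hi.ne'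
    have hbig_j := (hloc j).resolve_left hj.ne'
    omega
  obtain ⟨i, hi⟩ := Fin.exists_forall_eq_or_eq_add_one_of_pairwise_adjacent hM _ hadjacent
  refine ⟨i, fun x hx => ?_, hi⟩
  obtain ⟨j, hj⟩ := hcover x
  rcases hi j (card_pos.2 ⟨x, mem_inter.2 ⟨hx, hj⟩⟩) with rfl | rfl
  · exact mem_union_left _ hj
  · exact mem_union_right _ hj

/-- If the supports `A 1, …, A μ` of the local codes cover `[n]` and are
arranged cyclically (non-adjacent supports are disjoint, `μ ≥ 4`), and the erasure set
`E` satisfies `ρ < |E| ≤ 2ρ` while no local code has between `1` and `ρ` erasures, then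
all erased coordinates lie in the union `A i ∪ A (i+1)` of a single pair of consecutive
supports, i.e. `{i : |E ∩ A i| > 0} ⊆ {i, i+1}` for some `i`. -/
theorem stmt9 {n ρ : ℕ} (M : ℕ) [NeZero M] (hM : 4 ≤ M)
    (A : Fin M → Finset (Fin n))
    (hcover : ∀ x : Fin n, ∃ i, x ∈ A i)
    (hdisj : ∀ i j : Fin M, j ≠ i → j ≠ i + 1 → i ≠ j + 1 → Disjoint (A i) (A j))
    (E : Finset (Fin n)) (hlo : ρ < E.card) (hhi : E.card ≤ 2 * ρ)
    (hloc : ∀ i, (E ∩ A i).card = 0 ∨ ρ < (E ∩ A i).card) :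
    ∃ i : Fin M, (∀ x ∈ E, x ∈ A i ∪ A (i + 1)) ∧
      (∀ i', 0 < (E ∩ A i').card → i' = i ∨ i' = i + 1) :=
  stmt9_general M hM A hcover hdisj E hhi hloc
end

section
/- The block circulant code C_BC[μ,λ,ω,ρ] with μ = 2^a·λ over a field of characteristic 2 has minimum distance exactly λρ+1. -/
open Finset Polynomial Function
open Fin.NatCast

namespace Fin

variable {m n : ℕ} [NeZero n]

lemma natCast_val_natCast_of_dvd [NeZero m] (h : n ∣ m) (a : ℕ) :
    (((a : Fin m) : ℕ) : Fin n) = (a : Fin n) := by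
  ext
  simp only [val_natCast, Nat.mod_mod_of_dvd _ h]

lemma natCast_val_add_of_dvd (h : n ∣ m) (i j : Fin m) :
    (((i + j : Fin m) : ℕ) : Fin n) = ((i : ℕ) : Fin n) + ((j : ℕ) : Fin n) := by
  ext
  rw [val_natCast, val_add, Nat.mod_mod_of_dvd _ h, val_add, val_natCast, val_natCast,
    ← Nat.add_mod]

lemma natCast_val_add_natCast_of_dvd [NeZero m] (h : n ∣ m) (i : Fin m) (j : Fin n) :
    (((i + ((j : ℕ) : Fin m) : Fin m) : ℕ) : Fin n) = ((i : ℕ) : Fin n) + j := by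
  rw [natCast_val_add_of_dvd h, natCast_val_natCast_of_dvd h, cast_val_eq_self]

lemma natCast_val_castAdd (i : Fin n) : ((castAdd n i : ℕ) : Fin n) = i :=
  cast_val_eq_self i

lemma natCast_val_natAdd (i : Fin n) : ((natAdd n i : ℕ) : Fin n) = i := by
  rw [val_natAdd, Nat.cast_add, natCast_self, zero_add, cast_val_eq_self]

end Fin

lemma hammingNorm_add_le {ι : Type*} [Fintype ι] [DecidableEq ι] {β : ι → Type*}
    [∀ i, AddZeroClass (β i)] [∀ i, DecidableEq (β i)] (x y : ∀ i, β i) :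
    hammingNorm (x + y) ≤ hammingNorm x + hammingNorm y := by
  refine (card_le_card fun i hi => ?_).trans (card_union_le _ _)
  contrapose! hi
  simp_all

lemma hammingNorm_sum_le {ι κ : Type*} [Fintype ι] [DecidableEq ι] {β : ι → Type*}
    [∀ i, AddCommMonoid (β i)] [∀ i, DecidableEq (β i)] (s : Finset κ) (g : κ → ∀ i, β i) :
    hammingNorm (∑ k ∈ s, g k) ≤ ∑ k ∈ s, hammingNorm (g k) :=
  le_sum_of_subadditive (hammingNorm : (∀ i, β i) → ℕ) hammingNorm_zero.le hammingNorm_add_le s g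

def foldMod (H : ℕ) [NeZero H] {M : ℕ} {X : Type*} [AddCommMonoid X] (d : Fin M → X) :
    Fin H → X :=
  fun x => ∑ k : Fin M with (k.val : Fin H) = x, d k

lemma foldMod_add_self {H : ℕ} [NeZero H] {X : Type*} [AddCommMonoid X] (d : Fin (H + H) → X)
    (x : Fin H) : foldMod H d x = d (Fin.castAdd H x) + d (Fin.natAdd H x) := by
  have hne : ∀ y z : Fin H, Fin.castAdd H y ≠ Fin.natAdd H z := by
    simp only [ne_eq, Fin.ext_iff, Fin.val_castAdd, Fin.val_natAdd]
    omega
  have hfiber : ({k | ((k : ℕ) : Fin H) = x} : Finset (Fin (H + H)))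
      = {Fin.castAdd H x, Fin.natAdd H x} := by
    ext k
    induction k using Fin.addCases with
    | left y =>
      simp only [mem_filter, mem_univ, true_and, mem_insert, mem_singleton,
        Fin.natCast_val_castAdd, Fin.castAdd_inj, or_iff_left (hne _ _)]
    | right y =>
      simp only [mem_filter, mem_univ, true_and, mem_insert, mem_singleton,
        Fin.natCast_val_natAdd, Fin.natAdd_inj, or_iff_right (hne _ _).symm]
  rw [foldMod, hfiber, sum_pair (hne x x)]

lemma Polynomial.card_filter_eval_eq_zero_le {R ι : Type*} [CommRing R] [IsDomain R]
    [DecidableEq R] [Fintype ι] {f : ι → R} (hf : Injective f) {p : R[X]} (hp : p ≠ 0) :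
    #{x | p.eval (f x) = 0} ≤ p.natDegree := by
  by_contra! h
  refine hp (eq_zero_of_natDegree_lt_card_of_eval_eq_zero p
    (f := fun x : {x // p.eval (f x) = 0} => f x) (hf.comp Subtype.val_injective)
    (fun x => x.2) ?_)
  rwa [Fintype.card_subtype]

lemma bcWt_eq_sum_hammingNorm {F : Type*} [Field F] [DecidableEq F] {M ω ρ : ℕ}
    (d : Fin M → Fin ω → F) (p : Fin M → Fin ρ → F) :
    bcWt d p = ∑ k, (hammingNorm (d k) + hammingNorm (p k)) := rfl

section BlockCirculant

variable {F : Type*} [Field F] {lam ω ρ : ℕ}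
  {αo : Fin lam → Fin ω → F} {αe : Fin lam → Fin ρ → F}

def bcPoints (αo : Fin lam → Fin ω → F) (αe : Fin lam → Fin ρ → F) :
    (Fin lam × Fin ω) ⊕ (Fin lam × Fin ρ) → F :=
  Sum.elim (fun x => αo x.1 x.2) (fun x => αe x.1 x.2)

lemma bcWt_eval [DecidableEq F] (m : F[X]) :
    bcWt (fun t s => m.eval (αo t s)) (fun t s => m.eval (αe t s))
      = #{y | m.eval (bcPoints αo αe y) ≠ 0} := by
  rw [card_filter, Fintype.sum_sum_type, Fintype.sum_prod_type, Fintype.sum_prod_type]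
  simp only [bcWt, card_filter, sum_add_distrib, bcPoints, Sum.elim_inl, Sum.elim_inr]
  rfl

variable [NeZero lam]

def BCMinWeightGe [DecidableEq F] (M : ℕ) [NeZero M] (lam ω ρ : ℕ) [NeZero lam]
    (αo : Fin lam → Fin ω → F) (αe : Fin lam → Fin ρ → F) (w : ℕ) : Prop :=
  ∀ d p, inBC M lam ω ρ αo αe d p → (d ≠ 0 ∨ p ≠ 0) → w ≤ bcWt d p

lemma exists_eval_of_inBC_self (hω : 0 < ω) (hinj : Injective (bcPoints αo αe))
    {d : Fin lam → Fin ω → F} {p : Fin lam → Fin ρ → F} (hin : inBC lam lam ω ρ αo αe d p) :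
    ∃ m : F[X], m.natDegree ≤ lam * ω - 1 ∧
      d = (fun t s => m.eval (αo t s)) ∧ p = (fun t s => m.eval (αe t s)) := by
  choose m hdeg hdata hpar using hin
  -- with `M = λ` every window covers every block
  have hcover : ∀ i k s, d k s = (m i).eval (αo k s) := by
    intro i k s
    simpa [Fin.cast_val_eq_self] using hdata i (k - i) s
  have hconst : ∀ i, m i = m 0 := by
    intro i
    refine eq_of_natDegree_lt_card_of_eval_eq _ _ (hinj.comp Sum.inl_injective)
      (fun x => (hcover i x.1 x.2).symm.trans (hcover 0 x.1 x.2)) ?_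
    have := hdeg i; have := hdeg 0
    have : 0 < lam * ω := Nat.mul_pos (NeZero.pos lam) hω
    simp only [Fintype.card_prod, Fintype.card_fin]
    omega
  refine ⟨m 0, hdeg 0, funext₂ (hcover 0), funext₂ fun k s => ?_⟩
  simpa [Fin.cast_val_eq_self, hconst k] using hpar k s

lemma bcMinWeightGe_self [DecidableEq F] (hω : 0 < ω) (hinj : Injective (bcPoints αo αe)) :
    BCMinWeightGe lam lam ω ρ αo αe (lam * ρ + 1) := by
  intro d p hin hne
  obtain ⟨m, hdeg, rfl, rfl⟩ := exists_eval_of_inBC_self hω hinj hin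
  have hm : m ≠ 0 := by
    rintro rfl
    simp only [eval_zero] at hne
    exact hne.elim (· rfl) (· rfl)
  have hzeros := card_filter_eval_eq_zero_le hinj hm
  have hsplit := card_filter_add_card_filter_not (s := univ)
    (fun y => m.eval (bcPoints αo αe y) = 0)
  have : 0 < lam * ω := Nat.mul_pos (NeZero.pos lam) hω
  simp only [card_univ, Fintype.card_sum, Fintype.card_prod, Fintype.card_fin] at hsplit
  rw [bcWt_eval]
  simp only [← ne_eq] at hsplit
  omega

lemma inBC_foldMod {M H : ℕ} [NeZero M] [NeZero H] (hHM : H ∣ M) (hlamH : lam ∣ H)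
    {d : Fin M → Fin ω → F} {p : Fin M → Fin ρ → F} (hin : inBC M lam ω ρ αo αe d p) :
    inBC H lam ω ρ αo αe (foldMod H d) (foldMod H p) := by
  choose m hdeg hdata hpar using hin
  have hres : ∀ (x : Fin H) (k : Fin M), ((k : ℕ) : Fin H) = x →
      ((k : ℕ) : Fin lam) = ((x : ℕ) : Fin lam) := by
    rintro x k rfl
    exact (Fin.natCast_val_natCast_of_dvd hlamH _).symm
  intro x
  refine ⟨∑ k : Fin M with (k.val : Fin H) = x, m k,
    natDegree_sum_le_of_forall_le _ _ fun k _ => hdeg k, fun j s => ?_, fun s => ?_⟩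
  · rw [foldMod, Finset.sum_apply, eval_finsetSum, sum_filter, sum_filter]
    -- translation by `j` maps the residue class of `x` onto that of `x + j`
    refine (Fintype.sum_equiv (Equiv.addRight ((j : ℕ) : Fin M)) _ _ fun k => ?_).symm
    simp only [Equiv.coe_addRight, Fin.natCast_val_add_of_dvd hHM,
      Fin.natCast_val_natCast_of_dvd hHM, add_left_inj]
    split_ifs with hk
    · rw [hdata, hres x k hk]
    · rfl
  · rw [foldMod, Finset.sum_apply, eval_finsetSum]
    refine sum_congr rfl fun k hk => ?_
    rw [hpar, hres x k (mem_filter.1 hk).2]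

lemma inBC_of_inBC_comp {M H : ℕ} [NeZero M] [NeZero H] (hHM : H ∣ M) (hlamH : lam ∣ H)
    {e : Fin H → Fin ω → F} {f : Fin H → Fin ρ → F}
    (hin : inBC M lam ω ρ αo αe (fun k => e ((k : ℕ) : Fin H)) (fun k => f ((k : ℕ) : Fin H))) :
    inBC H lam ω ρ αo αe e f := by
  intro x
  obtain ⟨m, hdeg, hdata, hpar⟩ := hin ((x : ℕ) : Fin M)
  have hx : ((((x : ℕ) : Fin M) : ℕ) : Fin H) = x := by
    rw [Fin.natCast_val_natCast_of_dvd hHM, Fin.cast_val_eq_self]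
  have hxlam : ((((x : ℕ) : Fin M) : ℕ) : Fin lam) = ((x : ℕ) : Fin lam) :=
    Fin.natCast_val_natCast_of_dvd (hlamH.trans hHM) _
  refine ⟨m, hdeg, fun j s => ?_, fun s => ?_⟩
  · simpa only [Fin.natCast_val_add_of_dvd hHM, hx, Fin.natCast_val_natCast_of_dvd hHM,
      Fin.cast_val_eq_self, hxlam] using hdata j s
  · simpa only [hx, hxlam] using hpar s

lemma bcWt_foldMod_le [DecidableEq F] {M H : ℕ} [NeZero H] (d : Fin M → Fin ω → F)
    (p : Fin M → Fin ρ → F) : bcWt (foldMod H d) (foldMod H p) ≤ bcWt d p := by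
  have hfold : ∀ {n} (v : Fin M → Fin n → F) (x : Fin H),
      hammingNorm (foldMod H v x) ≤ ∑ k : Fin M with (k.val : Fin H) = x, hammingNorm (v k) :=
    fun v x => hammingNorm_sum_le _ _
  rw [bcWt_eq_sum_hammingNorm, bcWt_eq_sum_hammingNorm,
    ← sum_fiberwise univ (fun k : Fin M => ((k : ℕ) : Fin H))]
  refine sum_le_sum fun x _ => ?_
  rw [sum_add_distrib]
  exact add_le_add (hfold d x) (hfold p x)

lemma bcWt_comp_castAdd_le [DecidableEq F] {H : ℕ} (d : Fin (H + H) → Fin ω → F)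
    (p : Fin (H + H) → Fin ρ → F) :
    bcWt (fun x => d (Fin.castAdd H x)) (fun x => p (Fin.castAdd H x)) ≤ bcWt d p := by
  conv_rhs => rw [bcWt, Fin.sum_univ_add]
  exact Nat.le_add_right _ _

lemma eq_comp_natCast_of_foldMod_eq_zero [CharP F 2] {H n : ℕ} [NeZero H]
    {v : Fin (H + H) → Fin n → F} (h : foldMod H v = 0) :
    v = fun k : Fin (H + H) => v (Fin.castAdd H ((k : ℕ) : Fin H)) := by
  funext k s
  induction k using Fin.addCases with
  | left x => rw [Fin.natCast_val_castAdd]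
  | right x =>
    have hx := congr_fun (congr_fun h x) s
    rw [foldMod_add_self, Pi.add_apply, Pi.zero_apply, Pi.zero_apply, CharTwo.add_eq_zero] at hx
    rw [Fin.natCast_val_natAdd, hx]

lemma BCMinWeightGe.add_self [DecidableEq F] [CharP F 2] {H w : ℕ} [NeZero H] [NeZero (H + H)]
    (hlamH : lam ∣ H) (hH : BCMinWeightGe H lam ω ρ αo αe w) :
    BCMinWeightGe (H + H) lam ω ρ αo αe w := by
  intro d p hin hne
  have hdvd : H ∣ H + H := ⟨2, by ring⟩
  by_cases hfold : foldMod H d = 0 ∧ foldMod H p = 0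
  · have hd := eq_comp_natCast_of_foldMod_eq_zero hfold.1
    have hp := eq_comp_natCast_of_foldMod_eq_zero hfold.2
    refine (hH _ _ (inBC_of_inBC_comp hdvd hlamH ?_) ?_).trans (bcWt_comp_castAdd_le d p)
    · rwa [← hd, ← hp]
    · refine hne.imp (fun h he => h ?_) (fun h he => h ?_)
      · rw [hd]; funext k; exact congr_fun he _
      · rw [hp]; funext k; exact congr_fun he _
  · exact (hH _ _ (inBC_foldMod hdvd hlamH hin) (not_and_or.1 hfold)).trans
      (bcWt_foldMod_le d p)

lemma bcMinWeightGe_two_pow_mul [DecidableEq F] [CharP F 2] (hω : 0 < ω)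
    (hinj : Injective (bcPoints αo αe)) :
    ∀ (a M : ℕ) [NeZero M], M = 2 ^ a * lam → BCMinWeightGe M lam ω ρ αo αe (lam * ρ + 1)
  | 0, M, _, hM => by
    obtain rfl : M = lam := by simpa using hM
    exact bcMinWeightGe_self hω hinj
  | a + 1, M, _, hM => by
    obtain rfl : M = 2 ^ a * lam + 2 ^ a * lam := by rw [hM]; ring
    exact (bcMinWeightGe_two_pow_mul hω hinj a _ rfl).add_self (dvd_mul_left _ _)

lemma Polynomial.eval_prod_X_sub_C_eq_zero_iff {R ι : Type*} [CommRing R] [IsDomain R]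
    {f : ι → R} (hf : Injective f) (T : Finset ι) (y : ι) :
    (∏ x ∈ T, (X - C (f x))).eval (f y) = 0 ↔ y ∈ T := by
  simp [eval_prod, prod_eq_zero_iff, sub_eq_zero, hf.eq_iff]

def extendByZero {X : Type*} [Zero X] (n : ℕ) [NeZero n] {M : ℕ} (v : Fin n → X) : Fin M → X :=
  fun k => if (k : ℕ) < n then v ((k : ℕ) : Fin n) else 0

section extendByZero

variable {X : Type*} [Zero X] {n M : ℕ} [NeZero n] {v : Fin n → X} {k : Fin M}

lemma extendByZero_of_lt (hk : (k : ℕ) < n) : extendByZero n v k = v ((k : ℕ) : Fin n) :=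
  if_pos hk

lemma extendByZero_of_le (hk : n ≤ k) : extendByZero n v k = 0 :=
  if_neg hk.not_gt

end extendByZero

lemma bcWt_extendByZero [DecidableEq F] {M : ℕ} (hlamM : lam ≤ M) (d : Fin lam → Fin ω → F)
    (p : Fin lam → Fin ρ → F) :
    bcWt (M := M) (extendByZero lam d) (extendByZero lam p) = bcWt d p := by
  obtain ⟨r, rfl⟩ := Nat.exists_eq_add_of_le hlamM
  simp [bcWt_eq_sum_hammingNorm, Fin.sum_univ_add, extendByZero, Fin.cast_val_eq_self]

lemma inBC_extendByZero {M : ℕ} [NeZero M] (hdvd : lam ∣ M) {m : F[X]}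
    (hdeg : m.natDegree ≤ lam * ω - 1)
    (hm : ∀ (t : Fin lam) s, (t : ℕ) ≠ lam - 1 → m.eval (αo t s) = 0) :
    inBC M lam ω ρ αo αe (extendByZero lam fun t s => m.eval (αo t s))
      (extendByZero lam fun t s => m.eval (αe t s)) := by
  have hlamM : lam ≤ M := Nat.le_of_dvd (NeZero.pos M) hdvd
  intro i
  have hval : ∀ j : Fin lam, ((i + ((j : ℕ) : Fin M) : Fin M) : ℕ)
      = if M ≤ (i : ℕ) + j then (i : ℕ) + j - M else (i : ℕ) + j := fun j => by
    rw [Fin.val_add_eq_ite, Fin.val_cast_of_lt (by omega)]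
  by_cases hi : (i : ℕ) < lam
  · refine ⟨m, hdeg, fun j s => ?_, fun s => by rw [extendByZero_of_lt hi]⟩
    rw [← Fin.natCast_val_add_natCast_of_dvd hdvd]
    by_cases hk : ((i + ((j : ℕ) : Fin M) : Fin M) : ℕ) < lam
    · rw [extendByZero_of_lt hk]
    · -- the block `i + j` lies in `[λ, 2λ - 1)`
      rw [extendByZero_of_le (not_lt.1 hk), Pi.zero_apply, hm _ s]
      have := hval j
      rw [Fin.val_natCast, Nat.mod_eq_sub_mod (not_lt.1 hk),
        Nat.mod_eq_of_lt (by split_ifs at this <;> omega)]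
      split_ifs at this <;> omega
  · refine ⟨0, by simp, fun j s => ?_, fun s => ?_⟩
    · rw [eval_zero]
      by_cases hk : ((i + ((j : ℕ) : Fin M) : Fin M) : ℕ) < lam
      · -- a window starting at `i ≥ λ` reaches below `λ` only at blocks `< λ - 1`
        rw [extendByZero_of_lt hk, hm _ s]
        have := hval j
        rw [Fin.val_natCast, Nat.mod_eq_of_lt hk]
        split_ifs at this <;> omega
      · rw [extendByZero_of_le (not_lt.1 hk), Pi.zero_apply]
    · rw [eval_zero, extendByZero_of_le (not_lt.1 hi), Pi.zero_apply]

lemma exists_inBC_bcWt_eq [DecidableEq F] (hω : 0 < ω) (hinj : Injective (bcPoints αo αe))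
    {M : ℕ} [NeZero M] (hdvd : lam ∣ M) :
    ∃ d p, inBC M lam ω ρ αo αe d p ∧ (d ≠ 0 ∨ p ≠ 0) ∧ bcWt d p = lam * ρ + 1 := by
  have hlam := NeZero.pos lam
  have hlamM : lam ≤ M := Nat.le_of_dvd (NeZero.pos M) hdvd
  -- `m` vanishes at every data point except `x0`, the first point of the last block
  let x0 : Fin lam × Fin ω := (⟨lam - 1, by omega⟩, ⟨0, hω⟩)
  let T : Finset ((Fin lam × Fin ω) ⊕ (Fin lam × Fin ρ)) := (univ.erase x0).map Embedding.inl
  let m := ∏ y ∈ T, (X - C (bcPoints αo αe y))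
  have hroot := eval_prod_X_sub_C_eq_zero_iff hinj T
  have hT : ∀ x, Sum.inl x ∈ T ↔ x ≠ x0 := by simp [T]
  have hTcard : #T = lam * ω - 1 := by simp [T]
  have hdeg : m.natDegree = lam * ω - 1 := (natDegree_finsetProd_X_sub_C_eq_card _ _).trans hTcard
  refine ⟨_, _, inBC_extendByZero hdvd hdeg.le fun t s ht => (hroot (.inl (t, s))).2 ?_,
    Or.inl fun h => ?_, ?_⟩
  · exact (hT _).2 fun h => ht (congr_arg (fun x => (x.1 : ℕ)) h)
  · have h0 := congr_fun₂ h ⟨lam - 1, by omega⟩ x0.2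
    rw [extendByZero_of_lt (by simp; omega)] at h0
    have hx0 : (((⟨lam - 1, by omega⟩ : Fin M) : ℕ) : Fin lam) = x0.1 :=
      Fin.ext (Fin.val_cast_of_lt (by simp; omega))
    rw [hx0] at h0
    exact (hT x0).1 ((hroot (.inl x0)).1 h0) rfl
  · have hcompl : ({y | m.eval (bcPoints αo αe y) ≠ 0} : Finset _) = Tᶜ := by
      ext y
      simp only [mem_filter, mem_univ, true_and, mem_compl, ne_eq]
      exact (hroot y).not
    have : 0 < lam * ω := Nat.mul_pos hlam hω
    rw [bcWt_extendByZero hlamM, bcWt_eval, hcompl, card_compl, hTcard]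
    simp only [Fintype.card_sum, Fintype.card_prod, Fintype.card_fin]
    omega

end BlockCirculant

theorem stmt11_general {F : Type*} [Field F] [DecidableEq F] [CharP F 2] {a lam ω ρ : ℕ}
    [NeZero lam] (hω : 0 < ω)
    (M : ℕ) [NeZero M] (hM : M = 2 ^ a * lam)
    (αo : Fin lam → Fin ω → F) (αe : Fin lam → Fin ρ → F)
    (hinj : Function.Injective
      (Sum.elim (fun x : Fin lam × Fin ω => αo x.1 x.2)
                (fun x : Fin lam × Fin ρ => αe x.1 x.2))) :
    (∀ (d : Fin M → Fin ω → F) (p : Fin M → Fin ρ → F),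
      inBC M lam ω ρ αo αe d p → (d ≠ 0 ∨ p ≠ 0) → lam * ρ + 1 ≤ bcWt d p) ∧
    (∃ (d : Fin M → Fin ω → F) (p : Fin M → Fin ρ → F),
      inBC M lam ω ρ αo αe d p ∧ (d ≠ 0 ∨ p ≠ 0) ∧ bcWt d p = lam * ρ + 1) :=
  ⟨bcMinWeightGe_two_pow_mul hω hinj a M hM,
    exists_inBC_bcWt_eq hω hinj (hM ▸ dvd_mul_left lam (2 ^ a))⟩

/-- The block circulant code `C_BC[μ, λ, ω, ρ]` with `μ = 2^a · λ` over a
field of characteristic 2 (all `λ(ω+ρ)` evaluation points distinct and nonzero) has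
minimum distance exactly `λρ + 1`. -/
theorem stmt11 {F : Type*} [Field F] [DecidableEq F] [CharP F 2] {a lam ω ρ : ℕ}
    [NeZero lam] (hlam : 2 ≤ lam) (hω : 0 < ω) (hρ : 0 < ρ)
    (M : ℕ) [NeZero M] (hM : M = 2 ^ a * lam)
    (αo : Fin lam → Fin ω → F) (αe : Fin lam → Fin ρ → F)
    (hinj : Function.Injective
      (Sum.elim (fun x : Fin lam × Fin ω => αo x.1 x.2)
                (fun x : Fin lam × Fin ρ => αe x.1 x.2)))
    (h0o : ∀ j s, αo j s ≠ 0) (h0e : ∀ j s, αe j s ≠ 0) :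
    (∀ (d : Fin M → Fin ω → F) (p : Fin M → Fin ρ → F),
      inBC M lam ω ρ αo αe d p → (d ≠ 0 ∨ p ≠ 0) → lam * ρ + 1 ≤ bcWt d p) ∧
    (∃ (d : Fin M → Fin ω → F) (p : Fin M → Fin ρ → F),
      inBC M lam ω ρ αo αe d p ∧ (d ≠ 0 ∨ p ≠ 0) ∧ bcWt d p = lam * ρ + 1) :=
  stmt11_general hω M hM αo αe hinj
end

section
/- For any [n,k,d] code instantiating the product topology T_{m×ℓ}(a,b) (every column satisfies a parity checks with fixed coefficients, every row satisfies b parity checks with fixed coefficients), the minimum distance satisfies d ≤ (a+1)(b+1). -/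
/-!
A nonzero codeword has a nonzero entry, so its column through that entry is a nonzero vector
killed by the `a × m` matrix `α`. Restricting to any `a + 1` coordinates leaves `a` equations
in `a + 1` unknowns, so `ker α` also contains a nonzero vector `v` of weight at most `a + 1`;
likewise `ker β` contains a nonzero `w` of weight at most `b + 1`. The rank-one array
`v wᵀ` satisfies all column and row checks and has weight `|supp v| · |supp w|`.
-/

open Finset Matrix

section

variable {F : Type*} [Field F] {κ ι : Type*} [Fintype κ] [Fintype ι]

theorem Matrix.exists_mulVec_eq_zero_support_subset (A : Matrix κ ι F) (S : Finset ι)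
    (hS : Fintype.card κ < #S) : ∃ v ≠ 0, A *ᵥ v = 0 ∧ ∀ i ∉ S, v i = 0 := by
  classical
  -- `v ↦ (A v, v|Sᶜ)` lands in a space of dimension `card κ + (card ι - #S) < card ι`.
  let f := A.mulVecLin.prod (LinearMap.funLeft F F ((↑) : ↥Sᶜ → ι))
  have hker : LinearMap.ker f ≠ ⊥ := by
    apply LinearMap.ker_ne_bot_of_finrank_lt
    simp only [Module.finrank_prod, Module.finrank_fintype_fun_eq_card, Fintype.card_coe,
      card_compl]
    have := S.card_le_univ
    omega
  obtain ⟨v, hv, hv0⟩ := (Submodule.ne_bot_iff _).mp hker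
  simp only [f, LinearMap.ker_prod, Submodule.mem_inf, LinearMap.mem_ker, mulVecLin_apply] at hv
  exact ⟨v, hv0, hv.1, fun i hi => congrFun hv.2 ⟨i, mem_compl.2 hi⟩⟩

theorem Matrix.exists_mulVec_eq_zero_card_support_le [DecidableEq F] (A : Matrix κ ι F)
    (h : ∃ v ≠ 0, A *ᵥ v = 0) :
    ∃ v ≠ 0, A *ᵥ v = 0 ∧ #{i | v i ≠ 0} ≤ Fintype.card κ + 1 := by
  by_cases hι : Fintype.card ι ≤ Fintype.card κ + 1
  · obtain ⟨v, hv0, hv⟩ := h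
    exact ⟨v, hv0, hv, (card_filter_le _ _).trans hι⟩
  · obtain ⟨S, -, hS⟩ := exists_subset_card_eq (s := (univ : Finset ι))
      (n := Fintype.card κ + 1) (by rw [card_univ]; omega)
    obtain ⟨v, hv0, hv, hvS⟩ := A.exists_mulVec_eq_zero_support_subset S (by omega)
    refine ⟨v, hv0, hv, hS ▸ card_le_card fun i hi => ?_⟩
    by_contra hiS
    exact (mem_filter.1 hi).2 (hvS i hiS)

end

theorem Matrix.card_filter_vecMulVec_ne_zero {R m n : Type*} [MulZeroClass R] [NoZeroDivisors R]
    [DecidableEq R] [Fintype m] [Fintype n] (v : m → R) (w : n → R) :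
    #{ij : m × n | vecMulVec v w ij.1 ij.2 ≠ 0} = #{i | v i ≠ 0} * #{j | w j ≠ 0} := by
  simp only [vecMulVec_apply, ne_eq, mul_eq_zero, not_or]
  rw [← card_product, ← filter_product, univ_product_univ]

/-- For any code instantiating the product topology `T_{m×ℓ}(a,b)`
(every column satisfies `a` parity checks with fixed coefficients `α`, every row
satisfies `b` parity checks with fixed coefficients `β`), if the code is nonzero then it
contains a nonzero element of Hamming weight at most `(a+1)(b+1)`; hence
`d ≤ (a+1)(b+1)`. -/
theorem stmt12 {F : Type*} [Field F] [DecidableEq F] {m l a b : ℕ}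
    (α : Fin a → Fin m → F) (β : Fin b → Fin l → F)
    (C : Set (Matrix (Fin m) (Fin l) F))
    (hC : ∀ x, x ∈ C ↔
      ((∀ (u : Fin a) (j : Fin l), ∑ i, α u i * x i j = 0) ∧
       (∀ (u : Fin b) (i : Fin m), ∑ j, β u j * x i j = 0)))
    (hne : ∃ x ∈ C, x ≠ 0) :
    ∃ x ∈ C, x ≠ 0 ∧
      ((Finset.univ : Finset (Fin m × Fin l)).filter
        (fun ij => x ij.1 ij.2 ≠ 0)).card ≤ (a + 1) * (b + 1) := by
  let A : Matrix (Fin a) (Fin m) F := α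
  let B : Matrix (Fin b) (Fin l) F := β
  have hC' : ∀ x, x ∈ C ↔ A * x = 0 ∧ B * xᵀ = 0 := fun x => by
    rw [hC, ← Matrix.ext_iff, ← Matrix.ext_iff]; rfl
  obtain ⟨x, hxC, hx0⟩ := hne
  obtain ⟨hcol, hrow⟩ := (hC' x).1 hxC
  obtain ⟨i, j, hij⟩ : ∃ i j, x i j ≠ 0 := by
    by_contra! h
    exact hx0 (Matrix.ext h)
  obtain ⟨v, hv0, hv, hv_card⟩ := exists_mulVec_eq_zero_card_support_le A
    ⟨xᵀ j, fun h => hij congr($h i), funext fun u => congr_fun₂ hcol u j⟩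
  obtain ⟨w, hw0, hw, hw_card⟩ := exists_mulVec_eq_zero_card_support_le B
    ⟨x i, fun h => hij congr($h j), funext fun u => congr_fun₂ hrow u i⟩
  refine ⟨vecMulVec v w, (hC' _).2 ?_, ?_, ?_⟩
  · rw [transpose_vecMulVec, mul_vecMulVec, mul_vecMulVec, hv, hw]
    simp
  · obtain ⟨i, hi⟩ := Function.ne_iff.mp hv0
    obtain ⟨j, hj⟩ := Function.ne_iff.mp hw0
    exact fun h => mul_ne_zero hi hj congr($h i j)
  · rw [card_filter_vecMulVec_ne_zero]
    simpa using Nat.mul_le_mul hv_card hw_card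
end

section
/- If V and U are square Vandermonde matrices of the same size on two sets of distinct points with all points pairwise distinct across both sets, then every entry of U^{-1}V is nonzero (U^{-1}V is a Cauchy-like matrix with no zero entries). -/
open Matrix


/-- If `U` and `V` are square Vandermonde matrices of the same size on two
point sets `β` and `α` with all `2r` points pairwise distinct, then `U` is invertible and
every entry of `U⁻¹ * V` is nonzero (it is a Cauchy-like matrix with no zero entries). -/
theorem stmt14 {F : Type*} [Field F] {r : ℕ} (α β : Fin r → F)
    (hdist : Function.Injective (Sum.elim α β : Fin r ⊕ Fin r → F))
    (U V : Matrix (Fin r) (Fin r) F)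
    (hU : U = Matrix.of (fun (i j : Fin r) => β j ^ (i : ℕ)))
    (hV : V = Matrix.of (fun (i j : Fin r) => α j ^ (i : ℕ))) :
    IsUnit U ∧ ∀ i j, (U⁻¹ * V) i j ≠ 0 := by
  have hβ : Function.Injective β := fun a b h => by
    have := hdist (a₁ := Sum.inr a) (a₂ := Sum.inr b) (by simpa using h)
    simpa using this
  have hUT : U = (Matrix.vandermonde β)ᵀ := by
    rw [hU]; ext i j; simp [Matrix.vandermonde]
  have hdet : U.det ≠ 0 := by
    rw [hUT, Matrix.det_transpose]
    exact Matrix.det_vandermonde_ne_zero_iff.mpr hβ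
  have hUnit : IsUnit U := (Matrix.isUnit_iff_isUnit_det U).mpr hdet.isUnit
  refine ⟨hUnit, fun i j => ?_⟩
  have hentry : (U⁻¹ * V) i j
      = U.det⁻¹ * Matrix.cramer U (fun k => V k j) i := by
    rw [Matrix.cramer_eq_adjugate_mulVec, Matrix.inv_def, Ring.inverse_eq_inv]
    simp [Matrix.mul_apply, Matrix.mulVec, dotProduct, Finset.mul_sum, mul_assoc]
  have hαβ : ∀ p q, α p ≠ β q := fun p q h => by
    have := hdist (a₁ := Sum.inl p) (a₂ := Sum.inr q) (by simpa using h)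
    simp at this
  set γ : Fin r → F := Function.update β i (α j) with hγ
  have hγinj : Function.Injective γ := by
    intro a b h
    rw [hγ] at h
    by_cases ha : a = i <;> by_cases hb : b = i
    · rw [ha, hb]
    · rw [ha, Function.update_self, Function.update_of_ne hb] at h
      exact absurd h (hαβ j b)
    · rw [hb, Function.update_self, Function.update_of_ne ha] at h
      exact absurd h.symm (hαβ j a)
    · rw [Function.update_of_ne ha, Function.update_of_ne hb] at h
      exact hβ h
  have hcram : Matrix.cramer U (fun k => V k j) i = (Matrix.vandermonde γ).det := by
    rw [Matrix.cramer_apply]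
    have hupd : U.updateCol i (fun k => V k j)
        = (Matrix.vandermonde γ)ᵀ := by
      ext a b
      rcases eq_or_ne b i with rfl | hb
      · simp [hU, hV, hγ, Matrix.updateCol_apply, Matrix.vandermonde]
      · simp [hU, hV, hγ, Matrix.updateCol_apply, hb, Function.update_of_ne hb,
          Matrix.vandermonde]
    rw [hupd, Matrix.det_transpose]
  rw [hentry, hcram]
  exact mul_ne_zero (inv_ne_zero hdet)
    (Matrix.det_vandermonde_ne_zero_iff.mpr hγinj)
end
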